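/- arXiv:2407.16623 — 2 statements merged into one kernel-verified Lean document; each statement's English description precedes it below -/
import Mathlib

section
/- Let η be a random variable with density p(x), A a measurable set with P(η ∈ Aᶜ) ≤ ε < 1, and let ξ have density p(x)·1_A(x)/P(A). If ψ is measurable with E[ψ(η)²] < ∞, then |E[ψ(ξ)] − E[ψ(η)]| ≤ 2√(E[ψ(η)²])·√ε/(1 − ε). -/
open MeasureTheory ProbabilityTheory

/-!
Write `c = P(A)`, `d = P(Aᶜ) = 1 - c`. Since `E[ψ(ξ)] = c⁻¹ ∫_A ψ`, splitting `E[ψ(η)]` over `A`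
and `Aᶜ` gives `E[ψ(ξ)] - E[ψ(η)] = (d / c) ∫_A ψ - ∫_{Aᶜ} ψ`. By Cauchy–Schwarz
`|∫_B ψ| ≤ ‖ψ‖₂ √P(B)`, so the two terms are at most `‖ψ‖₂ ε / (1 - ε)` and `‖ψ‖₂ √ε`, and
`ε ≤ √ε` combines them into the stated bound.
-/

section

variable {S : Type*} [MeasurableSpace S]

lemma abs_integral_le_sqrt_integral_sq_mul_sqrt_measureReal_univ {ν : Measure S}
    [IsFiniteMeasure ν] {ψ : S → ℝ} (hψ : MemLp ψ 2 ν) :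
    |∫ x, ψ x ∂ν| ≤ √(∫ x, ψ x ^ 2 ∂ν) * √(ν.real Set.univ) := by
  have holder := integral_mul_le_Lp_mul_Lq_of_nonneg Real.HolderConjugate.two_two
    (f := |ψ|) (g := fun _ => (1 : ℝ)) (.of_forall fun _ => abs_nonneg _)
    (.of_forall fun _ => zero_le_one) (by simpa using hψ.abs) (by simpa using memLp_const 1)
  simp only [Pi.abs_apply, mul_one, Real.one_rpow, integral_const, smul_eq_mul] at holder
  have h_abs_sq : ∫ x, |ψ x| ^ (2 : ℝ) ∂ν = ∫ x, ψ x ^ 2 ∂ν := by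
    simp only [Real.rpow_two, sq_abs]
  rw [h_abs_sq, ← Real.sqrt_eq_rpow, ← Real.sqrt_eq_rpow] at holder
  exact (abs_integral_le_integral_abs).trans holder

lemma abs_setIntegral_le_sqrt_integral_sq_mul_sqrt_measureReal {μ : Measure S}
    [IsFiniteMeasure μ] {ψ : S → ℝ} (hψ : MemLp ψ 2 μ) (s : Set S) :
    |∫ x in s, ψ x ∂μ| ≤ √(∫ x, ψ x ^ 2 ∂μ) * √(μ.real s) := by
  have h_sq_mono : ∫ x in s, ψ x ^ 2 ∂μ ≤ ∫ x, ψ x ^ 2 ∂μ :=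
    setIntegral_le_integral hψ.integrable_sq (.of_forall fun _ => sq_nonneg _)
  calc |∫ x in s, ψ x ∂μ|
      ≤ √(∫ x in s, ψ x ^ 2 ∂μ) * √((μ.restrict s).real Set.univ) :=
        abs_integral_le_sqrt_integral_sq_mul_sqrt_measureReal_univ (hψ.restrict s)
    _ ≤ √(∫ x, ψ x ^ 2 ∂μ) * √(μ.real s) := by
        rw [measureReal_restrict_apply_univ]
        gcongr

lemma integral_cond_eq_inv_mul_setIntegral (μ : Measure S) (A : Set S) (f : S → ℝ) :
    ∫ x, f x ∂μ[|A] = (μ.real A)⁻¹ * ∫ x in A, f x ∂μ := by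
  rw [ProbabilityTheory.cond, integral_smul_measure, ENNReal.toReal_inv, smul_eq_mul,
    measureReal_def]

lemma integral_cond_sub_integral (μ : Measure S) [IsProbabilityMeasure μ] {A : Set S}
    (hA : MeasurableSet A) {f : S → ℝ} (hf : Integrable f μ) :
    ∫ x, f x ∂μ[|A] - ∫ x, f x ∂μ
      = μ.real Aᶜ / μ.real A * ∫ x in A, f x ∂μ - ∫ x in Aᶜ, f x ∂μ := by
  rw [integral_cond_eq_inv_mul_setIntegral, ← integral_add_compl hA hf]
  rcases eq_or_ne (μ.real A) 0 with hc | hc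
  · rw [setIntegral_measure_zero f ((measureReal_eq_zero_iff).1 hc)]
    ring
  · rw [← sub_eq_of_eq_add' (probReal_add_probReal_compl hA).symm]
    field_simp
    ring

end

lemma div_one_sub_add_sqrt_le {ε : ℝ} (hε0 : 0 ≤ ε) (hε1 : ε < 1) :
    ε / (1 - ε) + √ε ≤ 2 * √ε / (1 - ε) := by
  have h1ε : 0 < 1 - ε := by linarith
  have hε_le_sqrt : ε ≤ √ε := Real.le_sqrt_of_sq_le (by nlinarith)
  rw [div_add' _ _ _ h1ε.ne', div_le_div_iff_of_pos_right h1ε]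
  nlinarith [Real.sqrt_nonneg ε]

theorem truncation_lemma_sq_general
    {S : Type*} [MeasurableSpace S] (μ : Measure S) [IsProbabilityMeasure μ]
    (A : Set S) (hA : MeasurableSet A)
    (ε : ℝ) (hε1 : ε < 1)
    (hAc : (μ Aᶜ).toReal ≤ ε)
    (ψ : S → ℝ) (hψ : Measurable ψ)
    (hψ2 : Integrable (fun x => ψ x ^ 2) μ) :
    |∫ x, ψ x ∂(μ[|A]) - ∫ x, ψ x ∂μ|
      ≤ 2 * Real.sqrt (∫ x, ψ x ^ 2 ∂μ) * Real.sqrt ε / (1 - ε) := by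
  have hψL2 : MemLp ψ 2 μ := (memLp_two_iff_integrable_sq hψ.aestronglyMeasurable).2 hψ2
  have hd : μ.real Aᶜ ≤ ε := hAc
  have hd0 : 0 ≤ μ.real Aᶜ := measureReal_nonneg
  have hε0 : 0 ≤ ε := hd0.trans hd
  have hc : 1 - ε ≤ μ.real A := by linarith [probReal_add_probReal_compl (μ := μ) hA]
  have hA_le : μ.real A ≤ 1 := measureReal_le_one
  set s := √(∫ x, ψ x ^ 2 ∂μ)
  have hIA : |∫ x in A, ψ x ∂μ| ≤ s := by
    simpa using (abs_setIntegral_le_sqrt_integral_sq_mul_sqrt_measureReal hψL2 A).trans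
      (mul_le_of_le_one_right (Real.sqrt_nonneg _) (Real.sqrt_le_one.2 hA_le))
  have hIAc : |∫ x in Aᶜ, ψ x ∂μ| ≤ s * √ε :=
    (abs_setIntegral_le_sqrt_integral_sq_mul_sqrt_measureReal hψL2 Aᶜ).trans (by gcongr)
  have hratio : μ.real Aᶜ / μ.real A ≤ ε / (1 - ε) := by gcongr
  calc |∫ x, ψ x ∂(μ[|A]) - ∫ x, ψ x ∂μ|
      = |μ.real Aᶜ / μ.real A * ∫ x in A, ψ x ∂μ - ∫ x in Aᶜ, ψ x ∂μ| := by
        rw [integral_cond_sub_integral μ hA (hψL2.integrable one_le_two)]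
    _ ≤ |μ.real Aᶜ / μ.real A * ∫ x in A, ψ x ∂μ| + |∫ x in Aᶜ, ψ x ∂μ| := abs_sub _ _
    _ = μ.real Aᶜ / μ.real A * |∫ x in A, ψ x ∂μ| + |∫ x in Aᶜ, ψ x ∂μ| := by
        rw [abs_mul, abs_of_nonneg (by positivity)]
    _ ≤ ε / (1 - ε) * s + s * √ε := by gcongr
    _ = s * (ε / (1 - ε) + √ε) := by ring
    _ ≤ s * (2 * √ε / (1 - ε)) := by gcongr; exact div_one_sub_add_sqrt_le hε0 hε1
    _ = 2 * s * √ε / (1 - ε) := by ring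

/-- Truncation lemma: if η has law μ, A is measurable with P(η ∈ Aᶜ) ≤ ε < 1 and ξ has the
conditional law μ(·|A), then for ψ measurable with E[ψ(η)²] < ∞,
|E[ψ(ξ)] − E[ψ(η)]| ≤ 2√(E[ψ(η)²])·√ε/(1 − ε). -/
theorem truncation_lemma_sq
    {S : Type*} [MeasurableSpace S] (μ : Measure S) [IsProbabilityMeasure μ]
    (A : Set S) (hA : MeasurableSet A)
    (ε : ℝ) (hε0 : 0 ≤ ε) (hε1 : ε < 1)
    (hAc : (μ Aᶜ).toReal ≤ ε)
    (ψ : S → ℝ) (hψ : Measurable ψ)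
    (hψ2 : Integrable (fun x => ψ x ^ 2) μ) :
    |∫ x, ψ x ∂(μ[|A]) - ∫ x, ψ x ∂μ|
      ≤ 2 * Real.sqrt (∫ x, ψ x ^ 2 ∂μ) * Real.sqrt ε / (1 - ε) :=
  truncation_lemma_sq_general μ A hA ε hε1 hAc ψ hψ hψ2
end

section
/- Let (ξ₁,…,ξ_N) be conditionally i.i.d. given a σ-algebra F with conditional law μ, where μ is itself obtained from a law ν by conditioning on an event of probability at least 1−ε (ε < 1). Define the weighted sums Sₙ = (1/N)∑ᵢ(φ(ξᵢ) − E[φ(ξᵢ)|F]). If ∫|φ|⁴ dν < ∞, then E[|Sₙ|⁴ | F] ≤ (2⁵/((1−ε)²·N²))·∫|φ|⁴ dν. -/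
open MeasureTheory ProbabilityTheory
open scoped ENNReal

section Helpers

variable {α : Type*} {mα : MeasurableSpace α} {μ : Measure α}

lemma aux_memLp4 {f : α → ℝ} (hf : AEStronglyMeasurable f μ)
    (h : Integrable (fun x => |f x| ^ 4) μ) : MemLp f 4 μ := by
  have h4 : ((4 : ℝ≥0∞)) ≠ 0 := by norm_num
  have h4' : ((4 : ℝ≥0∞)) ≠ ∞ := by norm_num
  refine (memLp_norm_rpow_iff (p := 4) (q := 4) hf h4 h4').mp ?_
  have hd : (4 : ℝ≥0∞) / 4 = 1 := ENNReal.div_self h4 h4'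
  rw [hd, memLp_one_iff_integrable]
  have : (fun x : α => ‖f x‖ ^ (4 : ℝ≥0∞).toReal) = fun x => |f x| ^ 4 := by
    funext x
    rw [Real.norm_eq_abs]
    rw [show ((4:ℝ≥0∞)).toReal = ((4:ℕ):ℝ) by norm_num, Real.rpow_natCast]
  rw [this]; exact h

lemma aux_int4 {f : α → ℝ} (h : MemLp f 4 μ) :
    Integrable (fun x => |f x| ^ 4) μ := by
  have := h.integrable_norm_rpow (by norm_num) (by norm_num)
  convert this using 2 with x
  rw [Real.norm_eq_abs, show ((4:ℝ≥0∞)).toReal = ((4:ℕ):ℝ) by norm_num, Real.rpow_natCast]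

lemma jensen_sq [IsProbabilityMeasure μ] {f : α → ℝ} (hf : AEStronglyMeasurable f μ)
    (h : Integrable (fun x => f x ^ 2) μ) :
    (∫ x, f x ∂μ) ^ 2 ≤ ∫ x, f x ^ 2 ∂μ := by
  have hm : MemLp f 2 μ := (memLp_two_iff_integrable_sq hf).mpr h
  have hv := variance_nonneg f μ
  rw [variance_eq_sub hm] at hv
  simp only [Pi.pow_apply] at hv
  linarith

lemma integrable_pow_of_memLp4 [IsProbabilityMeasure μ] {f : α → ℝ}
    (h : MemLp f 4 μ) {k : ℕ} (hk : k ≤ 4) : Integrable (fun x => f x ^ k) μ := by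
  have hint : Integrable (fun x => 1 + |f x| ^ 4) μ := (integrable_const 1).add (aux_int4 h)
  refine Integrable.mono' hint
    ((h.aestronglyMeasurable.aemeasurable.pow_const k).aestronglyMeasurable) ?_
  refine Filter.Eventually.of_forall fun x => ?_
  rw [Real.norm_eq_abs, abs_pow]
  rcases le_total (|f x|) 1 with hx | hx
  · have : |f x| ^ k ≤ 1 := pow_le_one₀ (abs_nonneg _) hx
    nlinarith [pow_nonneg (abs_nonneg (f x)) 4]
  · have : |f x| ^ k ≤ |f x| ^ 4 := pow_le_pow_right₀ hx hk
    linarith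

lemma ae_iIndepFun_of_kernel {α Ω' : Type*} {mα : MeasurableSpace α} {mΩ : MeasurableSpace Ω'}
    {κ : ProbabilityTheory.Kernel α Ω'} {μ : Measure α}
    {N : ℕ} {X : Fin N → Ω' → ℝ}
    (hX : ∀ i, Measurable (X i))
    (h : ProbabilityTheory.Kernel.iIndepFun X κ μ) :
    ∀ᵐ a ∂μ, ProbabilityTheory.iIndepFun X (κ a) := by
  classical
  have hprob : ∀ᵐ a ∂μ, IsProbabilityMeasure (κ a) := h.ae_isProbabilityMeasure
  have hall : ∀ᵐ a ∂μ, ∀ (S : Finset (Fin N)) (q : Fin N → ℚ),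
      κ a (⋂ i ∈ S, X i ⁻¹' Set.Iic ((q i : ℝ))) = ∏ i ∈ S, κ a (X i ⁻¹' Set.Iic ((q i : ℝ))) := by
    rw [MeasureTheory.ae_all_iff]
    intro S
    rw [MeasureTheory.ae_all_iff]
    intro q
    exact h.meas_biInter (fun i _ => ⟨Set.Iic ((q i : ℝ)), measurableSet_Iic, rfl⟩)
  filter_upwards [hall, hprob] with a ha hp
  set π : Fin N → Set (Set Ω') := fun i => {s | ∃ q : ℚ, X i ⁻¹' Set.Iic ((q : ℝ)) = s} with hπ
  have hpi : ∀ i, IsPiSystem (π i) := by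
    intro i s ⟨q, hq⟩ t ⟨r, hr⟩ _
    refine ⟨min q r, ?_⟩
    rw [← hq, ← hr, ← Set.preimage_inter]
    congr 1
    ext x
    simp [le_min_iff]
  have hgen : ∀ i, MeasurableSpace.comap (X i) inferInstance
      = MeasurableSpace.generateFrom (π i) := by
    intro i
    have hb : (inferInstance : MeasurableSpace ℝ) = borel ℝ := BorelSpace.measurable_eq
    rw [hb, Real.borel_eq_generateFrom_Iic_rat, MeasurableSpace.comap_generateFrom]
    congr 1
    ext s
    simp only [Set.mem_image, Set.mem_iUnion, Set.mem_singleton_iff, hπ, Set.mem_setOf_eq]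
    constructor
    · rintro ⟨t, ⟨q, rfl⟩, rfl⟩; exact ⟨q, rfl⟩
    · rintro ⟨q, rfl⟩; exact ⟨Set.Iic (q : ℝ), ⟨q, rfl⟩, rfl⟩
  have hsets : ProbabilityTheory.iIndepSets π (κ a) := by
    rw [ProbabilityTheory.iIndepSets_iff]
    intro S f H
    set q : Fin N → ℚ := fun i => if hi : i ∈ S then (H i hi).choose else 0 with hq
    have hf : ∀ i ∈ S, f i = X i ⁻¹' Set.Iic ((q i : ℝ)) := by
      intro i hi
      have := (H i hi).choose_spec
      simp only [hq, dif_pos hi]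
      exact this.symm
    have h1 : (⋂ i ∈ S, f i) = ⋂ i ∈ S, X i ⁻¹' Set.Iic ((q i : ℝ)) :=
      Set.iInter₂_congr hf
    have h2 : ∏ i ∈ S, κ a (f i) = ∏ i ∈ S, κ a (X i ⁻¹' Set.Iic ((q i : ℝ))) :=
      Finset.prod_congr rfl fun i hi => by rw [hf i hi]
    rw [h1, h2]
    exact ha S q
  exact ProbabilityTheory.iIndepSets.iIndep
    (m := fun i => MeasurableSpace.comap (X i) inferInstance)
    (fun i => (hX i).comap_le) π hpi hgen hsets

lemma fourth_moment_bound [IsProbabilityMeasure μ] {N : ℕ} {Y : Fin N → α → ℝ}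
    (hmeas : ∀ i, Measurable (Y i))
    (hindep : ProbabilityTheory.iIndepFun Y μ)
    {M4 M2 : ℝ}
    (hY4 : ∀ i, MemLp (Y i) 4 μ)
    (hmean : ∀ i, ∫ x, Y i x ∂μ = 0)
    (h4 : ∀ i, ∫ x, (Y i x) ^ 4 ∂μ ≤ M4)
    (h2 : ∀ i, (∫ x, (Y i x) ^ 2 ∂μ) ^ 2 ≤ M2)
    (T : Finset (Fin N)) :
    (∫ x, (∑ i ∈ T, Y i x) ^ 2 ∂μ = ∑ i ∈ T, ∫ x, (Y i x) ^ 2 ∂μ) ∧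
      ∫ x, (∑ i ∈ T, Y i x) ^ 4 ∂μ ≤ (T.card : ℝ) * M4 + 3 * (T.card : ℝ) ^ 2 * M2 := by
  classical
  induction T using Finset.induction_on with
  | empty => simp
  | @insert j T hj IH =>
    obtain ⟨IH2, IH4⟩ := IH
    have hM2 : 0 ≤ M2 := le_trans (sq_nonneg _) (h2 j)
    set S : α → ℝ := fun x => ∑ i ∈ T, Y i x with hS
    have hSY : ProbabilityTheory.IndepFun S (Y j) μ := by
      have hdisj : Disjoint T {j} := Finset.disjoint_singleton_right.mpr hj
      have hfin := hindep.indepFun_finset T {j} hdisj hmeas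
      have hg : Measurable fun v : (i : (T : Finset (Fin N))) → ℝ => ∑ i, v i :=
        Finset.univ.measurable_sum fun i _ => measurable_pi_apply i
      have hh : Measurable fun v : (i : ({j} : Finset (Fin N))) → ℝ =>
          v ⟨j, Finset.mem_singleton_self j⟩ := measurable_pi_apply _
      have h' := hfin.comp hg hh
      have e1 : ((fun v : (i : (T : Finset (Fin N))) → ℝ => ∑ i, v i) ∘
          fun a (i : (T : Finset (Fin N))) => Y i a) = S := by
        funext a
        simp only [Function.comp_apply, hS]
        exact Finset.sum_coe_sort T fun i => Y i a
      have e2 : ((fun v : (i : ({j} : Finset (Fin N))) → ℝ =>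
          v ⟨j, Finset.mem_singleton_self j⟩) ∘
          fun a (i : ({j} : Finset (Fin N))) => Y i a) = Y j := rfl
      rwa [e1, e2] at h'
    have hSmem : MemLp S 4 μ := by
      have := memLp_finset_sum' (μ := μ) (p := 4) T (fun i _ => hY4 i)
      have e : (∑ i ∈ T, Y i) = S := by funext a; simp [hS, Finset.sum_apply]
      rwa [e] at this
    have intS : ∀ k : ℕ, k ≤ 4 → Integrable (fun x => S x ^ k) μ :=
      fun k hk => integrable_pow_of_memLp4 hSmem hk
    have intY : ∀ k : ℕ, k ≤ 4 → Integrable (fun x => Y j x ^ k) μ :=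
      fun k hk => integrable_pow_of_memLp4 (hY4 j) hk
    have hprod : ∀ a b : ℕ, a ≤ 4 → b ≤ 4 →
        Integrable (fun x => S x ^ a * Y j x ^ b) μ ∧
        ∫ x, S x ^ a * Y j x ^ b ∂μ = (∫ x, S x ^ a ∂μ) * ∫ x, Y j x ^ b ∂μ := by
      intro a b ha hb
      have hab : ProbabilityTheory.IndepFun (fun x => S x ^ a) (fun x => Y j x ^ b) μ :=
        hSY.comp (measurable_id.pow_const a) (measurable_id.pow_const b)
      constructor
      · have := hab.integrable_mul (intS a ha) (intY b hb)
        exact this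
      · have := hab.integral_mul_eq_mul_integral (intS a ha).aestronglyMeasurable
          (intY b hb).aestronglyMeasurable
        exact this
    have hS1 : ∫ x, S x ∂μ = 0 := by
      rw [hS, integral_finset_sum T fun i _ => (hY4 i).integrable (by norm_num)]
      simp [hmean]
    have hY1 : ∫ x, Y j x ∂μ = 0 := hmean j
    have E2 : ∫ x, (Y j x + S x) ^ 2 ∂μ = ∫ x, Y j x ^ 2 ∂μ + ∫ x, S x ^ 2 ∂μ := by
      have e : (fun x => (Y j x + S x) ^ 2)
          = fun x => (Y j x ^ 2 + S x ^ 2) + 2 * (S x ^ 1 * Y j x ^ 1) := by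
        funext x; ring
      have iA : Integrable (fun x => Y j x ^ 2 + S x ^ 2) μ :=
        (intY 2 (by norm_num)).add (intS 2 (by norm_num))
      have iB : Integrable (fun x => 2 * (S x ^ 1 * Y j x ^ 1)) μ :=
        (hprod 1 1 (by norm_num) (by norm_num)).1.const_mul 2
      rw [e, integral_add iA iB,
        integral_add (intY 2 (by norm_num)) (intS 2 (by norm_num)),
        integral_const_mul, (hprod 1 1 (by norm_num) (by norm_num)).2]
      simp only [pow_one, hS1, hY1]
      ring
    have E4 : ∫ x, (Y j x + S x) ^ 4 ∂μ
        = ∫ x, Y j x ^ 4 ∂μ + ∫ x, S x ^ 4 ∂μ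
          + 6 * ((∫ x, S x ^ 2 ∂μ) * ∫ x, Y j x ^ 2 ∂μ) := by
      have e : (fun x => (Y j x + S x) ^ 4)
          = fun x => (Y j x ^ 4 + S x ^ 4)
            + (6 * (S x ^ 2 * Y j x ^ 2)
              + (4 * (S x ^ 3 * Y j x ^ 1) + 4 * (S x ^ 1 * Y j x ^ 3))) := by
        funext x; ring
      have iA : Integrable (fun x => Y j x ^ 4 + S x ^ 4) μ :=
        (intY 4 le_rfl).add (intS 4 le_rfl)
      have i22 : Integrable (fun x => 6 * (S x ^ 2 * Y j x ^ 2)) μ :=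
        (hprod 2 2 (by norm_num) (by norm_num)).1.const_mul 6
      have i31 : Integrable (fun x => 4 * (S x ^ 3 * Y j x ^ 1)) μ :=
        (hprod 3 1 (by norm_num) (by norm_num)).1.const_mul 4
      have i13 : Integrable (fun x => 4 * (S x ^ 1 * Y j x ^ 3)) μ :=
        (hprod 1 3 (by norm_num) (by norm_num)).1.const_mul 4
      have iC : Integrable (fun x => 4 * (S x ^ 3 * Y j x ^ 1) + 4 * (S x ^ 1 * Y j x ^ 3)) μ :=
        i31.add i13
      have iB : Integrable (fun x => 6 * (S x ^ 2 * Y j x ^ 2)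
          + (4 * (S x ^ 3 * Y j x ^ 1) + 4 * (S x ^ 1 * Y j x ^ 3))) μ := i22.add iC
      rw [e, integral_add iA iB,
        integral_add (intY 4 le_rfl) (intS 4 le_rfl),
        integral_add i22 iC,
        integral_add i31 i13,
        integral_const_mul, integral_const_mul, integral_const_mul,
        (hprod 2 2 (by norm_num) (by norm_num)).2,
        (hprod 3 1 (by norm_num) (by norm_num)).2,
        (hprod 1 3 (by norm_num) (by norm_num)).2]
      simp only [pow_one, hS1, hY1]
      ring
    have esum : ∀ x, (∑ i ∈ insert j T, Y i x) = Y j x + S x := fun x =>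
      Finset.sum_insert hj
    have ecard : ((insert j T).card : ℝ) = (T.card : ℝ) + 1 := by
      rw [Finset.card_insert_of_notMem hj]; push_cast; ring
    constructor
    · simp only [esum]
      rw [E2, Finset.sum_insert hj, IH2]
    · simp only [esum]
      rw [E4, ecard]
      have hcross : (∫ x, S x ^ 2 ∂μ) * ∫ x, Y j x ^ 2 ∂μ ≤ (T.card : ℝ) * M2 := by
        rw [IH2, Finset.sum_mul]
        have hb : ∀ i ∈ T, (∫ x, Y i x ^ 2 ∂μ) * ∫ x, Y j x ^ 2 ∂μ ≤ M2 := by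
          intro i _
          have hi2 := h2 i
          have hj2 := h2 j
          have hi0 : 0 ≤ ∫ x, Y i x ^ 2 ∂μ := integral_nonneg fun x => sq_nonneg _
          have hj0 : 0 ≤ ∫ x, Y j x ^ 2 ∂μ := integral_nonneg fun x => sq_nonneg _
          nlinarith
        calc ∑ i ∈ T, (∫ x, Y i x ^ 2 ∂μ) * ∫ x, Y j x ^ 2 ∂μ
            ≤ ∑ _i ∈ T, M2 := Finset.sum_le_sum hb
          _ = (T.card : ℝ) * M2 := by rw [Finset.sum_const, nsmul_eq_mul]
      have hYj4 := h4 j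
      nlinarith [Nat.cast_nonneg (α := ℝ) T.card]

end Helpers

/-- Conditional fourth-moment bound for centered averages of conditionally i.i.d. samples whose
common conditional law μ is a conditioning ν(·|A) of ν on an event A with ν(A) ≥ 1−ε > 0:
E[|Sₙ|⁴ | F] ≤ (2⁵/((1−ε)²·N²))·∫|φ|⁴ dν, where Sₙ = (1/N)∑ᵢ(φ(ξᵢ) − E[φ(ξᵢ)|F]). -/
theorem conditional_iid_truncated_fourth_moment
    {Ω S : Type*} {ℱ : MeasurableSpace Ω} {mΩ : MeasurableSpace Ω} [StandardBorelSpace Ω] [MeasurableSpace S]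
    {P : Measure Ω} [IsProbabilityMeasure P]
    (hℱ : ℱ ≤ mΩ)
    (ν : Measure S) [IsProbabilityMeasure ν]
    (A : Set S) (hA : MeasurableSet A)
    (ε : ℝ) (hε0 : 0 ≤ ε) (hε1 : ε < 1)
    (hνA : 1 - ε ≤ (ν A).toReal)
    {N : ℕ} (hN : 0 < N) (ξ : Fin N → Ω → S)
    (hmeas : ∀ i, Measurable (ξ i))
    (hindep : iCondIndepFun ℱ hℱ ξ P)
    (hlaw : ∀ i, @Measure.map Ω S mΩ _ (ξ i) P = ν[|A])
    (φ : S → ℝ) (hφ : Measurable φ)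
    (hφ4 : Integrable (fun x => |φ x| ^ 4) ν)
    (hcondmean : ∀ i, P[fun ω => φ (ξ i ω) | ℱ] =ᵐ[P] fun _ => ∫ x, φ x ∂(ν[|A]))
    (hcond4 : ∀ i,
      P[fun ω => |φ (ξ i ω)| ^ 4 | ℱ] =ᵐ[P] fun _ => ∫ x, |φ x| ^ 4 ∂(ν[|A])) :
    ∀ᵐ ω ∂P,
      (P[fun ω' => |(N : ℝ)⁻¹ * ∑ i, (φ (ξ i ω') - ∫ x, φ x ∂(ν[|A]))| ^ 4 | ℱ]) ω
        ≤ (2 ^ 5 / ((1 - ε) ^ 2 * (N : ℝ) ^ 2)) * ∫ x, |φ x| ^ 4 ∂ν := by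
  classical
  letI : MeasurableSpace Ω := mΩ
  have hmeas' : ∀ i, @Measurable Ω S mΩ _ (ξ i) := fun i => (hmeas i)
  have hε : (0:ℝ) < 1 - ε := by linarith
  set μ : Measure S := ν[|A] with hμdef
  have hνA0 : ν A ≠ 0 := by
    intro h0
    rw [h0] at hνA
    simp only [ENNReal.toReal_zero] at hνA
    linarith
  haveI hμprob : IsProbabilityMeasure μ := cond_isProbabilityMeasure hνA0
  -- integrability under μ and moment comparison
  have hφ4μ : Integrable (fun x => |φ x| ^ 4) μ := by
    rw [hμdef, ProbabilityTheory.cond]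
    exact (hφ4.restrict).smul_measure (ENNReal.inv_ne_top.mpr hνA0)
  set Mμ : ℝ := ∫ x, |φ x| ^ 4 ∂μ with hMμdef
  set Iν : ℝ := ∫ x, |φ x| ^ 4 ∂ν with hIνdef
  have hMμ0 : 0 ≤ Mμ := integral_nonneg fun x => by positivity
  have hIν0 : 0 ≤ Iν := integral_nonneg fun x => by positivity
  have hMμle : (1 - ε) * Mμ ≤ Iν := by
    have h1 : ∫ x, |φ x| ^ 4 ∂(ν.restrict A) ≤ Iν :=
      integral_mono_measure Measure.restrict_le_self
        (Filter.Eventually.of_forall fun x => by positivity) hφ4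
    have h3 : 0 ≤ ∫ x, |φ x| ^ 4 ∂(ν.restrict A) := integral_nonneg fun x => by positivity
    have h2 : (1 - ε) * ((ν A)⁻¹).toReal ≤ 1 := by
      rw [ENNReal.toReal_inv]
      have hpos : (0:ℝ) < (ν A).toReal := lt_of_lt_of_le hε hνA
      rw [mul_inv_le_iff₀ hpos, one_mul]
      exact hνA
    have hMeq : Mμ = ((ν A)⁻¹).toReal * ∫ x, |φ x| ^ 4 ∂(ν.restrict A) := by
      rw [hMμdef, hμdef, ProbabilityTheory.cond, integral_smul_measure, smul_eq_mul]
    rw [hMeq]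
    calc (1 - ε) * (((ν A)⁻¹).toReal * ∫ x, |φ x| ^ 4 ∂(ν.restrict A))
        = ((1 - ε) * ((ν A)⁻¹).toReal) * ∫ x, |φ x| ^ 4 ∂(ν.restrict A) := by ring
      _ ≤ 1 * ∫ x, |φ x| ^ 4 ∂(ν.restrict A) := by
          apply mul_le_mul_of_nonneg_right h2 h3
      _ ≤ Iν := by rw [one_mul]; exact h1
  have hφmem : MemLp φ 4 μ := aux_memLp4 hφ.aestronglyMeasurable hφ4μ
  set m : ℝ := ∫ x, φ x ∂μ with hmdef
  have habs4 : ∀ a : ℝ, |a| ^ 4 = a ^ 4 := fun a => by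
    rw [pow_abs, abs_of_nonneg (by positivity)]
  have hMμalt : Mμ = ∫ x, φ x ^ 4 ∂μ := by
    rw [hMμdef]; congr 1; funext x; exact habs4 _
  have hm4 : m ^ 4 ≤ Mμ := by
    have hj1 : m ^ 2 ≤ ∫ x, φ x ^ 2 ∂μ :=
      jensen_sq hφ.aestronglyMeasurable (integrable_pow_of_memLp4 hφmem (by norm_num))
    have hi4 : Integrable (fun x => (φ x ^ 2) ^ 2) μ := by
      have := integrable_pow_of_memLp4 hφmem (le_refl 4)
      convert this using 2 with x
      ring
    have hj2 : (∫ x, φ x ^ 2 ∂μ) ^ 2 ≤ ∫ x, (φ x ^ 2) ^ 2 ∂μ :=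
      jensen_sq (hφ.pow_const 2).aestronglyMeasurable hi4
    have he : ∫ x, (φ x ^ 2) ^ 2 ∂μ = Mμ := by
      rw [hMμalt]; congr 1; funext x; ring
    have h20 : 0 ≤ m ^ 2 := sq_nonneg m
    have h2i : 0 ≤ ∫ x, φ x ^ 2 ∂μ := integral_nonneg fun x => sq_nonneg _
    calc m ^ 4 = (m ^ 2) ^ 2 := by ring
      _ ≤ (∫ x, φ x ^ 2 ∂μ) ^ 2 := by apply pow_le_pow_left₀ h20 hj1
      _ ≤ ∫ x, (φ x ^ 2) ^ 2 ∂μ := hj2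
      _ = Mμ := he
  -- properties of X i = φ ∘ ξ i under P
  have hXmeas : ∀ i, Measurable fun ω => φ (ξ i ω) := fun i => hφ.comp (hmeas' i)
  have hXmemP : ∀ i, MemLp (fun ω => φ (ξ i ω)) 4 P := by
    intro i
    have hmap : MemLp φ 4 (Measure.map (ξ i) P) := by rw [hlaw i]; exact hφmem
    exact (memLp_map_measure_iff hφ.aestronglyMeasurable (hmeas' i).aemeasurable).mp hmap
  have hX4P : ∀ i, Integrable (fun ω => |φ (ξ i ω)| ^ 4) P := fun i => aux_int4 (hXmemP i)
  have hXintP : ∀ i, Integrable (fun ω => φ (ξ i ω)) P := fun i =>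
    (hXmemP i).integrable (by norm_num)
  -- integrability of the averaged centered sum's 4th power
  have hfInt : Integrable (fun ω' => |(N : ℝ)⁻¹ * ∑ i, (φ (ξ i ω') - m)| ^ 4) P := by
    apply aux_int4
    have hZ : MemLp (fun ω => ∑ i, (φ (ξ i ω) - m)) 4 P := by
      have := memLp_finset_sum' (μ := P) (p := 4) Finset.univ
        (f := fun i ω => φ (ξ i ω) - m) (fun i _ => (hXmemP i).sub (memLp_const m))
      have e : (∑ i : Fin N, fun ω => φ (ξ i ω) - m) = fun ω => ∑ i, (φ (ξ i ω) - m) := by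
        funext a; simp [Finset.sum_apply]
      rwa [e] at this
    exact hZ.const_mul _
  -- conditional expectation through the kernel
  have heq := condExp_ae_eq_integral_condExpKernel hℱ hfInt
  have hmean_ae : ∀ i, ∀ᵐ ω ∂P,
      ∫ y, φ (ξ i y) ∂(condExpKernel P ℱ ω) = m := by
    intro i
    have h1 := condExp_ae_eq_integral_condExpKernel hℱ (hXintP i)
    have h2 := hcondmean i
    filter_upwards [h1, h2] with ω hω1 hω2
    rw [← hω1, hω2]
  have h4_ae : ∀ i, ∀ᵐ ω ∂P,
      ∫ y, |φ (ξ i y)| ^ 4 ∂(condExpKernel P ℱ ω) = Mμ := by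
    intro i
    have h1 := condExp_ae_eq_integral_condExpKernel hℱ (hX4P i)
    have h2 := hcond4 i
    filter_upwards [h1, h2] with ω hω1 hω2
    rw [← hω1, hω2]
  have hint_ae : ∀ i, ∀ᵐ ω ∂P,
      Integrable (fun y => |φ (ξ i y)| ^ 4) (condExpKernel P ℱ ω) :=
    fun i => (hX4P i).condExpKernel_ae
  have hindepK : ∀ᵐ ω ∂P, ProbabilityTheory.iIndepFun
      (fun i => fun ω' => φ (ξ i ω')) (condExpKernel P ℱ ω) := by
    apply ae_of_ae_trim hℱ
    apply ae_iIndepFun_of_kernel hXmeas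
    have := ProbabilityTheory.Kernel.iIndepFun.comp hindep (fun _ => φ) (fun _ => hφ)
    exact this
  filter_upwards [heq, MeasureTheory.ae_all_iff.mpr hmean_ae, MeasureTheory.ae_all_iff.mpr h4_ae,
    MeasureTheory.ae_all_iff.mpr hint_ae, hindepK] with ω hωeq hωmean hω4 hωint hωindep
  rw [hωeq]
  set κ : Measure Ω := condExpKernel P ℱ ω with hκdef
  haveI : IsProbabilityMeasure κ := by rw [hκdef]; infer_instance
  -- moments under κ
  have hXmemκ : ∀ i, MemLp (fun y => φ (ξ i y)) 4 κ := fun i =>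
    aux_memLp4 (hXmeas i).aestronglyMeasurable (hωint i)
  have hYmemκ : ∀ i, MemLp (fun y => φ (ξ i y) - m) 4 κ := fun i =>
    (hXmemκ i).sub (memLp_const m)
  have hXintκ : ∀ i, Integrable (fun y => φ (ξ i y)) κ := fun i =>
    (hXmemκ i).integrable (by norm_num)
  have hX4κ : ∀ i, ∫ y, φ (ξ i y) ^ 4 ∂κ = Mμ := by
    intro i
    rw [← hω4 i]
    congr 1; funext y; rw [habs4]
  have hYmean : ∀ i, ∫ y, (φ (ξ i y) - m) ∂κ = 0 := by
    intro i
    rw [integral_sub (hXintκ i) (integrable_const m), integral_const, hωmean i]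
    simp
  have hYmeasκ : ∀ i, Measurable fun y => φ (ξ i y) - m := fun i =>
    (hXmeas i).sub measurable_const
  have hYindep : ProbabilityTheory.iIndepFun
      (fun i => fun y => φ (ξ i y) - m) κ := by
    have := (hωindep).comp (fun _ => fun x : ℝ => x - m)
      (fun _ => measurable_id.sub measurable_const)
    exact this
  have hY4κ : ∀ i, ∫ y, (φ (ξ i y) - m) ^ 4 ∂κ ≤ 16 * Mμ := by
    intro i
    have hb : ∀ y, (φ (ξ i y) - m) ^ 4 ≤ 8 * φ (ξ i y) ^ 4 + 8 * m ^ 4 := by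
      intro y
      nlinarith [sq_nonneg (φ (ξ i y) + m), sq_nonneg (φ (ξ i y) - m),
        sq_nonneg (φ (ξ i y) ^ 2 - m ^ 2), sq_nonneg (φ (ξ i y) * m),
        sq_nonneg (φ (ξ i y) ^ 2 + m ^ 2)]
    have hi1 : Integrable (fun y => (φ (ξ i y) - m) ^ 4) κ :=
      integrable_pow_of_memLp4 (hYmemκ i) le_rfl
    have hi2 : Integrable (fun y => 8 * φ (ξ i y) ^ 4 + 8 * m ^ 4) κ :=
      ((integrable_pow_of_memLp4 (hXmemκ i) le_rfl).const_mul 8).add (integrable_const _)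
    calc ∫ y, (φ (ξ i y) - m) ^ 4 ∂κ
        ≤ ∫ y, (8 * φ (ξ i y) ^ 4 + 8 * m ^ 4) ∂κ := integral_mono hi1 hi2 hb
      _ = 8 * Mμ + 8 * m ^ 4 := by
          rw [integral_add ((integrable_pow_of_memLp4 (hXmemκ i) le_rfl).const_mul 8)
            (integrable_const _), integral_const_mul, hX4κ i, integral_const]
          simp
      _ ≤ 16 * Mμ := by linarith
  have hY2κ : ∀ i, (∫ y, (φ (ξ i y) - m) ^ 2 ∂κ) ^ 2 ≤ Mμ := by
    intro i
    have i1 : Integrable (fun y => φ (ξ i y) ^ 2) κ :=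
      integrable_pow_of_memLp4 (hXmemκ i) (by norm_num)
    have i2 : Integrable (fun y => (2 * m) * φ (ξ i y)) κ := (hXintκ i).const_mul _
    have e : (fun y => (φ (ξ i y) - m) ^ 2)
        = fun y => (φ (ξ i y) ^ 2 - (2 * m) * φ (ξ i y)) + m ^ 2 := by
      funext y; ring
    have hY2eq : ∫ y, (φ (ξ i y) - m) ^ 2 ∂κ = ∫ y, φ (ξ i y) ^ 2 ∂κ - m ^ 2 := by
      have iD : Integrable (fun y => φ (ξ i y) ^ 2 - (2 * m) * φ (ξ i y)) κ := i1.sub i2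
      rw [e, integral_add iD (integrable_const _), integral_sub i1 i2,
        integral_const_mul, hωmean i, integral_const]
      simp
      ring
    have h0 : 0 ≤ ∫ y, (φ (ξ i y) - m) ^ 2 ∂κ := integral_nonneg fun y => sq_nonneg _
    have hle : ∫ y, (φ (ξ i y) - m) ^ 2 ∂κ ≤ ∫ y, φ (ξ i y) ^ 2 ∂κ := by
      rw [hY2eq]; nlinarith [sq_nonneg m]
    have hj : (∫ y, φ (ξ i y) ^ 2 ∂κ) ^ 2 ≤ ∫ y, (φ (ξ i y) ^ 2) ^ 2 ∂κ :=
      jensen_sq ((hXmeas i).pow_const 2).aestronglyMeasurable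
        (by
          have := integrable_pow_of_memLp4 (hXmemκ i) (le_refl 4)
          convert this using 2 with y
          ring)
    have he4 : ∫ y, (φ (ξ i y) ^ 2) ^ 2 ∂κ = Mμ := by
      rw [← hX4κ i]; congr 1; funext y; ring
    calc (∫ y, (φ (ξ i y) - m) ^ 2 ∂κ) ^ 2
        ≤ (∫ y, φ (ξ i y) ^ 2 ∂κ) ^ 2 := by apply pow_le_pow_left₀ h0 hle
      _ ≤ ∫ y, (φ (ξ i y) ^ 2) ^ 2 ∂κ := hj
      _ = Mμ := he4
  -- apply the fourth moment bound
  obtain ⟨-, hbound⟩ := fourth_moment_bound (μ := κ) hYmeasκ hYindep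
    (M4 := 16 * Mμ) (M2 := Mμ) hYmemκ hYmean hY4κ hY2κ Finset.univ
  have hcardeq : ((Finset.univ : Finset (Fin N)).card : ℝ) = (N : ℝ) := by
    simp
  rw [hcardeq] at hbound
  -- rewrite the integral of the goal
  have hgoal_eq : ∫ y, |(N : ℝ)⁻¹ * ∑ i, (φ (ξ i y) - m)| ^ 4 ∂κ
      = ((N : ℝ)⁻¹) ^ 4 * ∫ y, (∑ i, (φ (ξ i y) - m)) ^ 4 ∂κ := by
    rw [← integral_const_mul]
    congr 1; funext y
    rw [habs4, mul_pow]
  rw [hgoal_eq]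
  -- final arithmetic
  have hn1 : (1:ℝ) ≤ (N:ℝ) := by exact_mod_cast hN
  have hn0 : (0:ℝ) < (N:ℝ) := by linarith
  have hIb : ∫ y, (∑ i, (φ (ξ i y) - m)) ^ 4 ∂κ ≤ (N:ℝ) * (16 * Mμ) + 3 * (N:ℝ)^2 * Mμ :=
    hbound
  have hstep : ((N : ℝ)⁻¹) ^ 4 * ∫ y, (∑ i, (φ (ξ i y) - m)) ^ 4 ∂κ
      ≤ ((N : ℝ)⁻¹) ^ 4 * ((N:ℝ) * (16 * Mμ) + 3 * (N:ℝ)^2 * Mμ) := by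
    apply mul_le_mul_of_nonneg_left hIb (by positivity)
  refine le_trans hstep ?_
  rw [show (2:ℝ)^5 = 32 by norm_num]
  rw [div_mul_eq_mul_div, le_div_iff₀ (by positivity)]
  have hexp : ((N : ℝ)⁻¹) ^ 4 * ((N:ℝ) * (16 * Mμ) + 3 * (N:ℝ)^2 * Mμ) * ((1 - ε) ^ 2 * (N:ℝ) ^ 2)
      = (16 + 3 * (N:ℝ)) * ((1 - ε) * Mμ) * (1 - ε) / (N:ℝ) := by
    field_simp
  rw [hexp]
  rw [div_le_iff₀ hn0]
  have h1ε : 1 - ε ≤ 1 := by linarith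
  have hεMμ : 0 ≤ (1 - ε) * Mμ := by positivity
  nlinarith [mul_le_mul_of_nonneg_left hMμle (by positivity : (0:ℝ) ≤ (16 + 3 * (N:ℝ)) * (1 - ε)),
    mul_le_mul_of_nonneg_right hn1 hIν0]
end
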